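/- arXiv:1401.7091 — 2 statements merged into one kernel-verified Lean document; each statement's English description precedes it below -/
import Mathlib

section
/- Let D be a simple strongly connected digraph on n vertices. Then 2 ≤ q(D) ≤ 2(n−1); moreover q(D) = 2n−2 if and only if D is isomorphic to the complete digraph K_n^↔ (with both arcs between every pair of distinct vertices), and q(D) = 2 if and only if D is isomorphic to the directed cycle C_n^→ on n vertices. -/
open Matrix

namespace SignlessDigraph

variable {n : ℕ}

/-- Real adjacency matrix of a (multi)digraph on `Fin n`, given by arc multiplicities. -/
def adjMat (W : Fin n → Fin n → ℕ) : Matrix (Fin n) (Fin n) ℝ :=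
  fun i j => (W i j : ℝ)

/-- Outdegree of a vertex. -/
def outdeg (W : Fin n → Fin n → ℕ) (i : Fin n) : ℕ := ∑ j, W i j

/-- Indegree of a vertex. -/
def indeg (W : Fin n → Fin n → ℕ) (i : Fin n) : ℕ := ∑ j, W j i

/-- The signless Laplacian matrix `Q(D) = diag(outdegrees) + A(D)`. -/
noncomputable def Qmat (W : Fin n → Fin n → ℕ) : Matrix (Fin n) (Fin n) ℝ :=
  Matrix.diagonal (fun i => (outdeg W i : ℝ)) + adjMat W

/-- Spectral radius of a real matrix: the maximum modulus of its (complex) eigenvalues. -/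
noncomputable def radius (M : Matrix (Fin n) (Fin n) ℝ) : ℝ :=
  sSup {r : ℝ | ∃ μ ∈ spectrum ℂ (M.map ((↑) : ℝ → ℂ)), r = ‖μ‖}

/-- The signless Laplacian spectral radius `q(D)`. -/
noncomputable def q (W : Fin n → Fin n → ℕ) : ℝ := radius (Qmat W)

/-- The (adjacency) spectral radius `ρ(D)`. -/
noncomputable def rho (W : Fin n → Fin n → ℕ) : ℝ := radius (adjMat W)

/-- A digraph is simple: no loops and no multiple arcs. -/
def Simple (W : Fin n → Fin n → ℕ) : Prop :=
  (∀ i, W i i = 0) ∧ ∀ i j, W i j ≤ 1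

/-- Strong connectivity: every vertex is reachable from every vertex by a directed path. -/
def StronglyConnected (W : Fin n → Fin n → ℕ) : Prop :=
  ∀ i j : Fin n, Relation.ReflTransGen (fun a b => W a b ≠ 0) i j

/-- Isomorphism of digraphs on `Fin n`. -/
def Iso (W W' : Fin n → Fin n → ℕ) : Prop :=
  ∃ e : Fin n ≃ Fin n, ∀ i j, W (e i) (e j) = W' i j

/-- The clique number: maximum size of a set of vertices with all arcs in both directions. -/
noncomputable def cliqueNum (W : Fin n → Fin n → ℕ) : ℕ :=
  sSup {d : ℕ | ∃ s : Finset (Fin n), s.card = d ∧ ∀ i ∈ s, ∀ j ∈ s, i ≠ j → W i j ≠ 0}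

/-- `W` has a directed cycle of length `c`. -/
def HasCycleLen (W : Fin n → Fin n → ℕ) (c : ℕ) : Prop :=
  ∃ (hc : 2 ≤ c) (p : Fin c → Fin n), Function.Injective p ∧
    ∀ i : Fin c, W (p i) (p ⟨((i : ℕ) + 1) % c, Nat.mod_lt _ (by omega)⟩) ≠ 0

/-- The girth: length of a shortest directed cycle. -/
noncomputable def girth (W : Fin n → Fin n → ℕ) : ℕ := sInf {c | HasCycleLen W c}

/-- The complete digraph `K_n^↔`. -/
def Kcomp (n : ℕ) : Fin n → Fin n → ℕ := fun i j => if i = j then 0 else 1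

/-- The directed cycle `C_n^→`, with arcs `i → i+1 (mod n)`. -/
def cyc (n : ℕ) : Fin n → Fin n → ℕ := fun i j => if (j : ℕ) = ((i : ℕ) + 1) % n then 1 else 0

/-- The digraph `B_{n,d}` (for `2 ≤ d ≤ n-1`): a complete digraph on the vertices
`0, …, d-1` together with a directed path `0 → d → d+1 → ⋯ → n-1 → 1`
(the path `u_1 u_2 ⋯ u_{n-d+2}` with `u_1 = 0`, `u_{n-d+2} = 1`,
and internal vertices `d, …, n-1`). -/
def B (n d : ℕ) : Fin n → Fin n → ℕ := fun i j =>
  if i ≠ j ∧ (i : ℕ) < d ∧ (j : ℕ) < d then 1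
  else if (i : ℕ) = 0 ∧ (j : ℕ) = d then 1
  else if d ≤ (i : ℕ) ∧ (j : ℕ) = (i : ℕ) + 1 then 1
  else if (i : ℕ) = n - 1 ∧ (j : ℕ) = 1 then 1
  else 0

/-- `B'_{n,d} = B_{n,d} − (u_{n-d+1}, u_{n-d+2}) + (u_{n-d+1}, u_1)`, i.e. the arc
`n-1 → 1` is replaced by the arc `n-1 → 0`. -/
def B' (n d : ℕ) : Fin n → Fin n → ℕ := fun i j =>
  if (i : ℕ) = n - 1 ∧ (j : ℕ) = 1 then 0
  else if (i : ℕ) = n - 1 ∧ (j : ℕ) = 0 then 1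
  else B n d i j

/-- The digraph `C_{n,g}` (for `2 ≤ g ≤ n-1`): vertices `u_1, …, u_n` are `0, …, n-1`,
with arcs `i → i+1` for `0 ≤ i ≤ n-2` together with the arcs `g-1 → 0` and `n-1 → 0`. -/
def Cng (n g : ℕ) : Fin n → Fin n → ℕ := fun i j =>
  if (j : ℕ) = (i : ℕ) + 1 then 1
  else if ((i : ℕ) = g - 1 ∨ (i : ℕ) = n - 1) ∧ (j : ℕ) = 0 then 1
  else 0

/-- `C'_{n,g} = C_{n,g} − (u_n, u_1) + (u_n, u_g)`, i.e. the arc `n-1 → 0` is replaced by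
the arc `n-1 → g-1`. -/
def Cng' (n g : ℕ) : Fin n → Fin n → ℕ := fun i j =>
  if (i : ℕ) = n - 1 ∧ (j : ℕ) = 0 then 0
  else if (i : ℕ) = n - 1 ∧ (j : ℕ) = g - 1 then 1
  else Cng n g i j

/-- The θ-digraph `θ(a,b,c)` realized on `Fin n` (intended for `n = a + b + c + 2`):
vertex `0` is the common initial vertex of the paths `P_{a+2}`, `P_{b+2}` and terminal
vertex of `P_{c+2}`; vertex `1` is the common terminal vertex of `P_{a+2}`, `P_{b+2}`
and initial vertex of `P_{c+2}`; the internal vertices of the three paths are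
`2, …, a+1`, `a+2, …, a+b+1` and `a+b+2, …, a+b+c+1` respectively. -/
def theta (n a b c : ℕ) : Fin n → Fin n → ℕ := fun i j =>
  if ((a = 0 ∧ (i : ℕ) = 0 ∧ (j : ℕ) = 1) ∨
      (a ≠ 0 ∧ (((i : ℕ) = 0 ∧ (j : ℕ) = 2) ∨
        (2 ≤ (i : ℕ) ∧ (i : ℕ) ≤ a ∧ (j : ℕ) = (i : ℕ) + 1) ∨
        ((i : ℕ) = a + 1 ∧ (j : ℕ) = 1))) ∨
      (b = 0 ∧ (i : ℕ) = 0 ∧ (j : ℕ) = 1) ∨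
      (b ≠ 0 ∧ (((i : ℕ) = 0 ∧ (j : ℕ) = a + 2) ∨
        (a + 2 ≤ (i : ℕ) ∧ (i : ℕ) ≤ a + b ∧ (j : ℕ) = (i : ℕ) + 1) ∨
        ((i : ℕ) = a + b + 1 ∧ (j : ℕ) = 1))) ∨
      (c = 0 ∧ (i : ℕ) = 1 ∧ (j : ℕ) = 0) ∨
      (c ≠ 0 ∧ (((i : ℕ) = 1 ∧ (j : ℕ) = a + b + 2) ∨
        (a + b + 2 ≤ (i : ℕ) ∧ (i : ℕ) ≤ a + b + c ∧ (j : ℕ) = (i : ℕ) + 1) ∨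
        ((i : ℕ) = a + b + c + 1 ∧ (j : ℕ) = 0))))
  then 1 else 0

/-- The digraph `K→(n,k,m)`: the vertex set is partitioned into
`V₁ = {0,…,m-1}`, `S = {m,…,m+k-1}`, `V₂ = {m+k,…,n-1}`; it is the complete digraph
with all arcs from `V₂` to `V₁` removed. -/
def Kdir (n k m : ℕ) : Fin n → Fin n → ℕ := fun i j =>
  if i = j then 0
  else if m + k ≤ (i : ℕ) ∧ (j : ℕ) < m then 0
  else 1

/-- The digraph `D_{uv}` obtained from `D` by deleting the arc `(u,v)`, identifying `u`
with `v` (the merged vertex is `v`; the vertex `u` becomes isolated) and deleting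
multiple arcs (and loops). -/
def contract (W : Fin n → Fin n → ℕ) (u v : Fin n) : Fin n → Fin n → ℕ :=
  fun i j =>
    if i = u ∨ j = u ∨ i = j then 0
    else if i = v then min 1 (W v j + W u j)
    else if j = v then min 1 (W i v + W i u)
    else min 1 (W i j)

/-- The digraph `D^w` obtained from `D` by subdividing the arc `(u,v)` with a new
vertex `w` (realized as the last vertex of `Fin (n+1)`). -/
def subdivide (W : Fin n → Fin n → ℕ) (u v : Fin n) : Fin (n + 1) → Fin (n + 1) → ℕ :=
  fun i j =>
    if hi : (i : ℕ) < n then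
      if hj : (j : ℕ) < n then
        if (⟨(i : ℕ), hi⟩ : Fin n) = u ∧ (⟨(j : ℕ), hj⟩ : Fin n) = v then 0
        else W ⟨(i : ℕ), hi⟩ ⟨(j : ℕ), hj⟩
      else if (⟨(i : ℕ), hi⟩ : Fin n) = u then 1 else 0
    else
      if hj : (j : ℕ) < n then (if (⟨(j : ℕ), hj⟩ : Fin n) = v then 1 else 0)
      else 0

/-!
The row sums of `Q(D)` are `2 d_i⁺`, and the spectral radius of a nonnegative matrix lies between
its smallest and its largest row sum: above by the `ℓ∞`-operator norm, below by Gelfand's formula.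
A strongly connected `D` has `Q(D)` primitive (its diagonal is positive), and then both bounds are
strict unless all row sums agree, since in `Q^(k+1) = Q^k Q` with `Q^k > 0` one deficient row
already lowers every row sum. So `q(D) = 2n - 2` forces all outdegrees to be `n - 1`, that is
`D = K_n^↔`, and `q(D) = 2` forces all outdegrees to be `1`: the arcs are then the graph of a
permutation which, by strong connectivity, is one cycle through all vertices, hence conjugate to
the rotation `i ↦ i + 1`.
-/

open Filter
open scoped NNReal

section RowSums

variable {ι : Type*} [Fintype ι] {A : Matrix ι ι ℝ}

lemma sum_mul_apply (B C : Matrix ι ι ℝ) (i : ι) :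
    ∑ j, (B * C) i j = ∑ l, B i l * ∑ j, C l j := by
  simp only [Matrix.mul_apply, Finset.mul_sum]
  exact Finset.sum_comm

variable [DecidableEq ι]

lemma sum_pow_apply_le (hA : ∀ i j, 0 ≤ A i j) {R : ℝ} (hR : 0 ≤ R) (hrow : ∀ i, ∑ j, A i j ≤ R)
    (k : ℕ) (i : ι) : ∑ j, (A ^ k) i j ≤ R ^ k := by
  induction k generalizing i with
  | zero => simp [Matrix.one_apply]
  | succ k ih =>
    calc ∑ j, (A ^ (k + 1)) i j = ∑ l, A i l * ∑ j, (A ^ k) l j := by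
          rw [pow_succ', sum_mul_apply]
      _ ≤ ∑ l, A i l * R ^ k := by gcongr with l; exacts [hA i l, ih l]
      _ ≤ R * R ^ k := by rw [← Finset.sum_mul]; gcongr; exact hrow i
      _ = R ^ (k + 1) := (pow_succ' R k).symm

lemma le_sum_pow_apply (hA : ∀ i j, 0 ≤ A i j) {c : ℝ} (hc : 0 ≤ c) (hrow : ∀ i, c ≤ ∑ j, A i j)
    (k : ℕ) (i : ι) : c ^ k ≤ ∑ j, (A ^ k) i j := by
  induction k generalizing i with
  | zero => simp [Matrix.one_apply]
  | succ k ih =>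
    calc c ^ (k + 1) = c * c ^ k := pow_succ' c k
      _ ≤ (∑ l, A i l) * c ^ k := by gcongr; exact hrow i
      _ ≤ ∑ l, A i l * ∑ j, (A ^ k) l j := by
        rw [Finset.sum_mul]; gcongr with l; exacts [hA i l, ih l]
      _ = ∑ j, (A ^ (k + 1)) i j := by rw [pow_succ', sum_mul_apply]

lemma pow_succ_apply_pos (hA : ∀ i j, 0 ≤ A i j) {k : ℕ} {i l j : ι} (hil : 0 < (A ^ k) i l)
    (hlj : 0 < A l j) : 0 < (A ^ (k + 1)) i j := by
  rw [pow_succ, Matrix.mul_apply]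
  exact Finset.sum_pos' (fun m _ => mul_nonneg (pow_apply_nonneg hA k i m) (hA m j))
    ⟨l, Finset.mem_univ l, mul_pos hil hlj⟩

/-- With a positive diagonal, positivity of `(A ^ k) i j` persists to all larger `k`, so one
power serves every pair `(i, j)` at once. -/
lemma isPrimitive_of_diag_pos (hA : ∀ i j, 0 ≤ A i j) (hdiag : ∀ i, 0 < A i i)
    (hconn : ∀ i j, Relation.ReflTransGen (fun a b => 0 < A a b) i j) : A.IsPrimitive := by
  have hmono : ∀ {i j k k'}, k ≤ k' → 0 < (A ^ k) i j → 0 < (A ^ k') i j := by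
    intro i j k k' hkk' hk
    induction k', hkk' using Nat.le_induction with
    | base => exact hk
    | succ k' _ ih => exact pow_succ_apply_pos hA ih (hdiag j)
  have hreach : ∀ i j, ∃ k, 0 < (A ^ k) i j := by
    intro i j
    induction hconn i j with
    | refl => exact ⟨0, by simp⟩
    | tail _ hbc ih =>
      obtain ⟨k, hk⟩ := ih
      exact ⟨k + 1, pow_succ_apply_pos hA hk hbc⟩
  choose k hk using hreach
  refine ⟨hA, Finset.univ.sup (fun p : ι × ι => k p.1 p.2) + 1, Nat.succ_pos _, fun i j => ?_⟩
  refine hmono ?_ (hk i j)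
  exact (Finset.le_sup (f := fun p : ι × ι => k p.1 p.2) (Finset.mem_univ (i, j))).trans
    (Nat.le_succ _)

end RowSums

section SpectralRadius

attribute [local instance] Matrix.linftyOpNormedRing Matrix.linftyOpNormedAlgebra

lemma map_ofReal_pow (A : Matrix (Fin n) (Fin n) ℝ) (k : ℕ) :
    (A ^ k).map ((↑) : ℝ → ℂ) = A.map ((↑) : ℝ → ℂ) ^ k :=
  map_pow (Complex.ofRealHom.mapMatrix : Matrix (Fin n) (Fin n) ℝ →+* _) A k

lemma norm_map_ofReal (A : Matrix (Fin n) (Fin n) ℝ) :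
    ‖A.map ((↑) : ℝ → ℂ)‖ = ((Finset.univ.sup fun i => ∑ j, ‖A i j‖₊ : ℝ≥0) : ℝ) := by
  simp [linfty_opNorm_def]

lemma sum_le_norm_map_ofReal {A : Matrix (Fin n) (Fin n) ℝ} (hA : ∀ i j, 0 ≤ A i j) (i : Fin n) :
    ∑ j, A i j ≤ ‖A.map ((↑) : ℝ → ℂ)‖ := by
  rw [norm_map_ofReal]
  calc ∑ j, A i j = ((∑ j, ‖A i j‖₊ : ℝ≥0) : ℝ) := by
        push_cast; exact Finset.sum_congr rfl fun j _ => (abs_of_nonneg (hA i j)).symm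
    _ ≤ _ := by gcongr; exact Finset.le_sup (f := fun i => ∑ j, ‖A i j‖₊) (Finset.mem_univ i)

lemma exists_norm_map_ofReal_eq_sum [NeZero n] {A : Matrix (Fin n) (Fin n) ℝ}
    (hA : ∀ i j, 0 ≤ A i j) : ∃ i, ‖A.map ((↑) : ℝ → ℂ)‖ = ∑ j, A i j := by
  obtain ⟨i, -, hi⟩ := Finset.exists_mem_eq_sup Finset.univ Finset.univ_nonempty
    fun i => ∑ j, ‖A i j‖₊
  refine ⟨i, ?_⟩
  rw [norm_map_ofReal, hi]
  push_cast
  exact Finset.sum_congr rfl fun j _ => abs_of_nonneg (hA i j)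

lemma radius_nonneg (A : Matrix (Fin n) (Fin n) ℝ) : 0 ≤ radius A :=
  Real.sSup_nonneg fun _ ⟨μ, _, hr⟩ => hr ▸ norm_nonneg μ

lemma radius_eq_norm {A : Matrix (Fin n) (Fin n) ℝ} {μ : ℂ}
    (hμ : μ ∈ spectrum ℂ (A.map ((↑) : ℝ → ℂ)))
    (hmax : ∀ ν ∈ spectrum ℂ (A.map ((↑) : ℝ → ℂ)), ‖ν‖ ≤ ‖μ‖) : radius A = ‖μ‖ :=
  IsGreatest.csSup_eq ⟨⟨μ, hμ, rfl⟩, by rintro _ ⟨ν, hν, rfl⟩; exact hmax ν hν⟩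

lemma exists_norm_eq_radius [NeZero n] (A : Matrix (Fin n) (Fin n) ℝ) :
    ∃ μ ∈ spectrum ℂ (A.map ((↑) : ℝ → ℂ)), radius A = ‖μ‖ ∧
      ∀ ν ∈ spectrum ℂ (A.map ((↑) : ℝ → ℂ)), ‖ν‖ ≤ ‖μ‖ := by
  obtain ⟨μ, hμ, hmax⟩ := (spectrum.isCompact (A.map ((↑) : ℝ → ℂ))).exists_isMaxOn
    (spectrum.nonempty _) continuous_norm.continuousOn
  exact ⟨μ, hμ, radius_eq_norm hμ hmax, hmax⟩

lemma radius_pow [NeZero n] (A : Matrix (Fin n) (Fin n) ℝ) (k : ℕ) :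
    radius (A ^ k) = radius A ^ k := by
  obtain ⟨μ, hμ, hr, hmax⟩ := exists_norm_eq_radius A
  rw [hr, ← norm_pow]
  apply radius_eq_norm
  · rw [map_ofReal_pow]; exact spectrum.pow_mem_pow _ k hμ
  · rw [map_ofReal_pow, spectrum.map_pow]
    rintro _ ⟨ν, hν, rfl⟩
    simp only [norm_pow]
    gcongr
    exact hmax ν hν

variable [NeZero n] {A : Matrix (Fin n) (Fin n) ℝ}

lemma exists_radius_le_sum (hA : ∀ i j, 0 ≤ A i j) : ∃ i, radius A ≤ ∑ j, A i j := by
  obtain ⟨μ, hμ, hr, -⟩ := exists_norm_eq_radius A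
  obtain ⟨i, hi⟩ := exists_norm_map_ofReal_eq_sum hA
  exact ⟨i, hr ▸ hi ▸ spectrum.norm_le_norm_of_mem hμ⟩

/-- If every row sum is at least `c`, then every row sum of `A ^ k` is at least `c ^ k`, so
`‖A ^ k‖ ^ (1 / k) ≥ c` in the `ℓ∞`-operator norm, and Gelfand's formula gives `c ≤ radius A`. -/
lemma exists_sum_le_radius (hA : ∀ i j, 0 ≤ A i j) : ∃ i, ∑ j, A i j ≤ radius A := by
  obtain ⟨i, -, hmin⟩ := Finset.exists_min_image Finset.univ (fun i => ∑ j, A i j)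
    Finset.univ_nonempty
  refine ⟨i, ?_⟩
  set c := ∑ j, A i j
  have hc : 0 ≤ c := Finset.sum_nonneg fun j _ => hA i j
  obtain ⟨μ, -, hr, hmax⟩ := exists_norm_eq_radius A
  have hlow : ∀ᶠ k : ℕ in atTop,
      ENNReal.ofReal c ≤ ENNReal.ofReal (‖A.map ((↑) : ℝ → ℂ) ^ k‖ ^ (1 / k : ℝ)) := by
    filter_upwards [eventually_ne_atTop 0] with k hk
    apply ENNReal.ofReal_le_ofReal
    calc c = (c ^ k) ^ (1 / k : ℝ) := by rw [one_div, Real.pow_rpow_inv_natCast hc hk]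
      _ ≤ _ := by
        gcongr
        rw [← map_ofReal_pow]
        exact (le_sum_pow_apply hA hc (fun l => hmin l (Finset.mem_univ l)) k i).trans
          (sum_le_norm_map_ofReal (pow_apply_nonneg hA k) i)
  have hsr : spectralRadius ℂ (A.map ((↑) : ℝ → ℂ)) ≤ ‖μ‖₊ :=
    iSup₂_le fun ν hν => by exact_mod_cast hmax ν hν
  rw [hr, ← ENNReal.ofReal_le_ofReal_iff (norm_nonneg μ), ofReal_norm]
  exact (ge_of_tendsto (spectrum.pow_norm_pow_one_div_tendsto_nhds_spectralRadius _) hlow).trans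
    hsr

lemma radius_lt_of_sum_lt (hA : A.IsPrimitive) {R : ℝ} (hrow : ∀ i, ∑ j, A i j ≤ R)
    {i₀ : Fin n} (hi₀ : ∑ j, A i₀ j < R) : radius A < R := by
  obtain ⟨hA0, k, -, hk⟩ := hA
  have hR : 0 < R := (Finset.sum_nonneg fun j _ => hA0 i₀ j).trans_lt hi₀
  obtain ⟨i, hi⟩ := exists_radius_le_sum (pow_apply_nonneg hA0 (k + 1))
  have hpow : radius A ^ (k + 1) < R ^ (k + 1) :=
    calc radius A ^ (k + 1) ≤ ∑ j, (A ^ (k + 1)) i j := radius_pow A (k + 1) ▸ hi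
      _ = ∑ l, (A ^ k) i l * ∑ j, A l j := by rw [pow_succ, sum_mul_apply]
      _ < ∑ l, (A ^ k) i l * R :=
        Finset.sum_lt_sum (fun l _ => mul_le_mul_of_nonneg_left (hrow l)
          (pow_apply_nonneg hA0 k i l)) ⟨i₀, Finset.mem_univ _, by gcongr; exact hk i i₀⟩
      _ ≤ R ^ k * R := by
        rw [← Finset.sum_mul]; gcongr; exact sum_pow_apply_le hA0 hR.le hrow k i
      _ = R ^ (k + 1) := (pow_succ R k).symm
  exact lt_of_pow_lt_pow_left₀ _ hR.le hpow

lemma lt_radius_of_lt_sum (hA : A.IsPrimitive) {c : ℝ} (hc : 0 ≤ c) (hrow : ∀ i, c ≤ ∑ j, A i j)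
    {i₁ : Fin n} (hi₁ : c < ∑ j, A i₁ j) : c < radius A := by
  obtain ⟨hA0, k, -, hk⟩ := hA
  obtain ⟨i, hi⟩ := exists_sum_le_radius (pow_apply_nonneg hA0 (k + 1))
  have hpow : c ^ (k + 1) < radius A ^ (k + 1) :=
    calc c ^ (k + 1) = c ^ k * c := pow_succ c k
      _ ≤ ∑ l, (A ^ k) i l * c := by
        rw [← Finset.sum_mul]; gcongr; exact le_sum_pow_apply hA0 hc hrow k i
      _ < ∑ l, (A ^ k) i l * ∑ j, A l j :=
        Finset.sum_lt_sum (fun l _ => mul_le_mul_of_nonneg_left (hrow l)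
          (pow_apply_nonneg hA0 k i l)) ⟨i₁, Finset.mem_univ _, by gcongr; exact hk i i₁⟩
      _ = ∑ j, (A ^ (k + 1)) i j := by rw [pow_succ, sum_mul_apply]
      _ ≤ radius A ^ (k + 1) := radius_pow A (k + 1) ▸ hi
  exact lt_of_pow_lt_pow_left₀ _ (radius_nonneg A) hpow

end SpectralRadius

section SignlessLaplacian

variable {W : Fin n → Fin n → ℕ}

lemma Qmat_apply (W : Fin n → Fin n → ℕ) (i j : Fin n) :
    Qmat W i j = (if i = j then (outdeg W i : ℝ) else 0) + W i j := by
  simp [Qmat, adjMat, Matrix.diagonal_apply]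

lemma Qmat_nonneg (W : Fin n → Fin n → ℕ) (i j : Fin n) : 0 ≤ Qmat W i j := by
  rw [Qmat_apply]; positivity

lemma sum_Qmat_apply (W : Fin n → Fin n → ℕ) (i : Fin n) :
    ∑ j, Qmat W i j = 2 * outdeg W i := by
  simp [Qmat_apply, Finset.sum_add_distrib, outdeg]
  ring

lemma outdeg_le_of_simple (hW : Simple W) (i : Fin n) : outdeg W i ≤ n - 1 := by
  rw [outdeg, ← Finset.add_sum_erase _ _ (Finset.mem_univ i), hW.1 i, zero_add]
  calc ∑ j ∈ Finset.univ.erase i, W i j ≤ ∑ _j ∈ Finset.univ.erase i, 1 :=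
        Finset.sum_le_sum fun j _ => hW.2 i j
    _ = n - 1 := by simp

lemma one_le_outdeg (hn : 2 ≤ n) (hsc : StronglyConnected W) (i : Fin n) : 1 ≤ outdeg W i := by
  have : Nontrivial (Fin n) := Fin.nontrivial_iff_two_le.mpr hn
  obtain ⟨j, hji⟩ := exists_ne i
  obtain rfl | ⟨c, hic, -⟩ := (hsc i j).cases_head
  · exact absurd rfl hji
  · exact (Nat.one_le_iff_ne_zero.mpr hic).trans (Finset.single_le_sum (fun _ _ => Nat.zero_le _)
      (Finset.mem_univ c))

lemma isPrimitive_Qmat (hn : 2 ≤ n) (hsc : StronglyConnected W) : (Qmat W).IsPrimitive := by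
  refine isPrimitive_of_diag_pos (Qmat_nonneg W) (fun i => ?_) fun i j =>
    Relation.ReflTransGen.mono (fun a b hab => ?_) i j (hsc i j)
  · have : (1 : ℝ) ≤ outdeg W i := by exact_mod_cast one_le_outdeg hn hsc i
    rw [Qmat_apply, if_pos rfl]
    positivity
  · have : (1 : ℝ) ≤ W a b := by exact_mod_cast Nat.one_le_iff_ne_zero.mpr hab
    rw [Qmat_apply]
    positivity

lemma q_le_of_outdeg_le [NeZero n] {d : ℕ} (hd : ∀ i, outdeg W i ≤ d) : q W ≤ 2 * d := by
  obtain ⟨i, hi⟩ := exists_radius_le_sum (Qmat_nonneg W)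
  rw [sum_Qmat_apply] at hi
  calc q W ≤ 2 * (outdeg W i : ℝ) := hi
    _ ≤ 2 * d := by gcongr; exact hd i

lemma le_q_of_le_outdeg [NeZero n] {d : ℕ} (hd : ∀ i, d ≤ outdeg W i) : 2 * d ≤ q W := by
  obtain ⟨i, hi⟩ := exists_sum_le_radius (Qmat_nonneg W)
  rw [sum_Qmat_apply] at hi
  calc 2 * (d : ℝ) ≤ 2 * (outdeg W i : ℝ) := by gcongr; exact hd i
    _ ≤ q W := hi

lemma q_lt_of_outdeg_lt (hn : 2 ≤ n) (hsc : StronglyConnected W) {d : ℕ}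
    (hd : ∀ i, outdeg W i ≤ d) {i₀ : Fin n} (hi₀ : outdeg W i₀ < d) : q W < 2 * d := by
  have : NeZero n := ⟨by omega⟩
  refine radius_lt_of_sum_lt (isPrimitive_Qmat hn hsc) (i₀ := i₀) (fun i => ?_) ?_ <;>
    rw [sum_Qmat_apply]
  · gcongr; exact hd i
  · gcongr

lemma lt_q_of_lt_outdeg (hn : 2 ≤ n) (hsc : StronglyConnected W) {d : ℕ}
    (hd : ∀ i, d ≤ outdeg W i) {i₁ : Fin n} (hi₁ : d < outdeg W i₁) : 2 * d < q W := by
  have : NeZero n := ⟨by omega⟩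
  refine lt_radius_of_lt_sum (isPrimitive_Qmat hn hsc) (by positivity) (i₁ := i₁)
    (fun i => ?_) ?_ <;> rw [sum_Qmat_apply]
  · gcongr; exact hd i
  · gcongr

end SignlessLaplacian

section Extremal

variable {W : Fin n → Fin n → ℕ}

lemma Iso.outdeg_eq_const {W' : Fin n → Fin n → ℕ} (h : Iso W W') {d : ℕ}
    (hd : ∀ i, outdeg W' i = d) (i : Fin n) : outdeg W i = d := by
  obtain ⟨e, he⟩ := h
  obtain ⟨a, rfl⟩ := e.surjective i
  rw [outdeg, ← e.sum_comp]
  simp only [he]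
  exact hd a

lemma Iso.refl (W : Fin n → Fin n → ℕ) : Iso W W := ⟨Equiv.refl _, fun _ _ => rfl⟩

lemma outdeg_Kcomp (i : Fin n) : outdeg (Kcomp n) i = n - 1 := by
  simp [outdeg, Kcomp, Finset.sum_ite, ← ne_eq, Finset.filter_ne]

lemma eq_Kcomp_of_outdeg_eq (hW : Simple W) (hd : ∀ i, outdeg W i = n - 1) : W = Kcomp n := by
  have hle : ∀ i j, W i j ≤ Kcomp n i j := by
    intro i j
    unfold Kcomp
    split_ifs with h
    · subst h; exact (hW.1 i).le
    · exact hW.2 i j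
  funext i j
  exact (Finset.sum_eq_sum_iff_of_le fun j _ => hle i j).1
    (by rw [← outdeg, ← outdeg, hd, outdeg_Kcomp]) j (Finset.mem_univ j)

def graphOf (f : Fin n → Fin n) : Fin n → Fin n → ℕ := fun i j => if j = f i then 1 else 0

lemma outdeg_graphOf (f : Fin n → Fin n) (i : Fin n) : outdeg (graphOf f) i = 1 := by
  simp [outdeg, graphOf]

lemma cyc_eq_graphOf_finRotate : cyc n = graphOf (finRotate n) := by
  funext i j
  cases n with
  | zero => exact i.elim0
  | succ m => simp [cyc, graphOf, Fin.ext_iff, Fin.val_add]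

lemma outdeg_cyc (i : Fin n) : outdeg (cyc n) i = 1 := by
  rw [cyc_eq_graphOf_finRotate]
  exact outdeg_graphOf _ i

lemma exists_eq_graphOf (hd : ∀ i, outdeg W i = 1) : ∃ f, W = graphOf f := by
  have : ∀ i, ∃ j, ∀ k, W i k = if k = j then 1 else 0 := by
    intro i
    have hsum : ∑ k, W i k = 1 := hd i
    obtain ⟨j, -, hj⟩ := Finset.exists_ne_zero_of_sum_ne_zero (hsum ▸ one_ne_zero)
    rw [← Finset.add_sum_erase _ _ (Finset.mem_univ j)] at hsum
    have hrest := Finset.sum_eq_zero_iff.1 (by omega : ∑ k ∈ Finset.univ.erase j, W i k = 0)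
    refine ⟨j, fun k => ?_⟩
    split_ifs with hk
    · subst hk; omega
    · exact hrest k (Finset.mem_erase.2 ⟨hk, Finset.mem_univ k⟩)
  choose f hf using this
  exact ⟨f, funext₂ hf⟩

lemma iso_graphOf_of_isConj {σ τ : Equiv.Perm (Fin n)} (h : IsConj σ τ) :
    Iso (graphOf σ) (graphOf τ) := by
  obtain ⟨c, rfl⟩ := isConj_iff.1 h.symm
  refine ⟨c, fun i j => ?_⟩
  simp [graphOf]

lemma surjective_of_stronglyConnected (hn : 2 ≤ n) {f : Fin n → Fin n}
    (hsc : StronglyConnected (graphOf f)) : f.Surjective := by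
  have : Nontrivial (Fin n) := Fin.nontrivial_iff_two_le.mpr hn
  intro j
  obtain ⟨i, hij⟩ := exists_ne j
  obtain rfl | ⟨c, -, hcj⟩ := (hsc i j).cases_tail
  · exact absurd rfl hij
  · exact ⟨c, by simpa [graphOf, eq_comm] using hcj⟩

lemma isCycle_of_stronglyConnected (hn : 2 ≤ n) {σ : Equiv.Perm (Fin n)}
    (hW : Simple (graphOf σ)) (hsc : StronglyConnected (graphOf σ)) :
    σ.IsCycle ∧ σ.support = Finset.univ := by
  have hne : ∀ i, σ i ≠ i := fun i h => by simpa [graphOf, h] using hW.1 i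
  have hsame : ∀ i j, σ.SameCycle i j := by
    intro i j
    induction hsc i j with
    | refl => exact Equiv.Perm.SameCycle.refl σ i
    | @tail b c _ hbc ih =>
      obtain rfl : c = σ b := by simpa [graphOf] using hbc
      exact Equiv.Perm.sameCycle_apply_right.2 ih
  exact ⟨⟨⟨0, by omega⟩, hne _, fun y _ => hsame _ y⟩,
    Finset.eq_univ_of_forall fun i => Equiv.Perm.mem_support.2 (hne i)⟩

lemma iso_cyc_of_outdeg_eq_one (hn : 2 ≤ n) (hW : Simple W) (hsc : StronglyConnected W)
    (hd : ∀ i, outdeg W i = 1) : Iso W (cyc n) := by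
  obtain ⟨f, rfl⟩ := exists_eq_graphOf hd
  have hsurj := surjective_of_stronglyConnected hn hsc
  set σ := Equiv.ofBijective f ⟨Finite.injective_iff_surjective.2 hsurj, hsurj⟩
  obtain ⟨hσ, hsupp⟩ := isCycle_of_stronglyConnected (σ := σ) hn hW hsc
  rw [cyc_eq_graphOf_finRotate]
  exact iso_graphOf_of_isConj (hσ.isConj (isCycle_finRotate_of_le hn)
    (by rw [hsupp, support_finRotate_of_le hn]))

end Extremal

/-- For a simple strongly connected digraph `D` on `n` vertices,
`2 ≤ q(D) ≤ 2(n-1)`, with `q(D) = 2n-2` iff `D ≅ K_n^↔` and `q(D) = 2` iff `D ≅ C_n^→`. -/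
theorem q_bounds_strongly_connected {n : ℕ} (hn : 2 ≤ n) (W : Fin n → Fin n → ℕ)
    (hW : Simple W) (hsc : StronglyConnected W) :
    2 ≤ q W ∧ q W ≤ 2 * ((n : ℝ) - 1) ∧
    (q W = 2 * (n : ℝ) - 2 ↔ Iso W (Kcomp n)) ∧
    (q W = 2 ↔ Iso W (cyc n)) := by
  have : NeZero n := ⟨by omega⟩
  have hcast : ((n - 1 : ℕ) : ℝ) = n - 1 := Nat.cast_pred (by omega)
  have hle := outdeg_le_of_simple hW
  have hge := one_le_outdeg hn hsc
  have hlow : 2 ≤ q W := by simpa using le_q_of_le_outdeg hge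
  have hup : q W ≤ 2 * ((n : ℝ) - 1) := hcast ▸ q_le_of_outdeg_le hle
  refine ⟨hlow, hup, ⟨fun hq => ?_, fun hK => ?_⟩, ⟨fun hq => ?_, fun hC => ?_⟩⟩
  · have hd : ∀ i, outdeg W i = n - 1 := by
      by_contra! ⟨i, hi⟩
      have := hcast ▸ q_lt_of_outdeg_lt hn hsc hle ((hle i).lt_of_ne hi)
      linarith
    rw [eq_Kcomp_of_outdeg_eq hW hd]
    exact Iso.refl _
  · have := hcast ▸ le_q_of_le_outdeg fun i => (hK.outdeg_eq_const outdeg_Kcomp i).ge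
    linarith
  · have hd : ∀ i, outdeg W i = 1 := by
      by_contra! ⟨i, hi⟩
      have := lt_q_of_lt_outdeg hn hsc hge ((hge i).lt_of_ne hi.symm)
      norm_num at this
      linarith
    exact iso_cyc_of_outdeg_eq_one hn hW hsc hd
  · have := q_le_of_outdeg_le fun i => (hC.outdeg_eq_const outdeg_cyc i).le
    norm_num at this
    linarith

end SignlessDigraph
end

section
/- Let D be a simple strongly connected digraph on n vertices that is not a directed cycle, and let u_1 u_2 ⋯ u_l (l ≥ 3) be a directed path in D such that the outdegree of u_i equals 1 for every i with 2 ≤ i ≤ l−1. Let x be the unique positive unit eigenvector of Q(D) corresponding to q(D), with x_i the coordinate at vertex u_i. Then x_2 < x_3 < ⋯ < x_{l−1} < x_l. -/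
open Matrix

/-! At an internal vertex `u_k` of the path the eigenequation reads `q x_k = x_k + x_{k+1}`, so
`x_{k+1} = (q - 1) x_k`. A strongly connected digraph in which every outdegree is `1` is a
directed cycle, so `D` has a vertex `v` with `d_v^+ ≥ 2`, and its eigenequation
`q x_v = d_v^+ x_v + ∑_{v → j} x_j` gives `q > d_v^+ ≥ 2`. The path is indexed from `0`:
`u_k` is `p (k - 1)`. -/

open Function

theorem val_finRotate {n : ℕ} (i : Fin n) : (finRotate n i : ℕ) = ((i : ℕ) + 1) % n := by
  have := i.neZero
  rw [finRotate_apply, Fin.val_add, Fin.val_one', Nat.add_mod_mod]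

theorem exists_conj_finRotate {n : ℕ} (f : Fin n → Fin n) (hreach : ∀ a b, ∃ k, f^[k] a = b) :
    ∃ e : Fin n ≃ Fin n, ∀ i, f (e i) = e (finRotate n i) := by
  rcases isEmpty_or_nonempty (Fin n) with hn | ⟨⟨z⟩⟩
  · exact ⟨Equiv.refl _, fun i => isEmptyElim i⟩
  set m := minimalPeriod f z
  have hm : 0 < m := by
    obtain ⟨k, hk⟩ := hreach (f z) z
    refine IsPeriodicPt.minimalPeriod_pos k.succ_pos ?_
    rwa [IsPeriodicPt, IsFixedPt, iterate_succ_apply]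
  have hinj : Set.InjOn (f^[·] z) (Set.Iio m) := iterate_injOn_Iio_minimalPeriod
  have hsurj : ∀ b, ∃ k < m, f^[k] z = b := fun b =>
    let ⟨k, hk⟩ := hreach z b; ⟨k % m, Nat.mod_lt _ hm, by rwa [iterate_mod_minimalPeriod_eq]⟩
  have hmn : m = n := by
    apply le_antisymm
    · simpa using Fintype.card_le_of_injective (fun k : Fin m => f^[k] z)
        fun a b hab => Fin.ext (hinj a.isLt b.isLt hab)
    · simpa using Fintype.card_le_of_surjective (fun k : Fin m => f^[k] z)
        fun b => let ⟨k, hk, hkb⟩ := hsurj b; ⟨⟨k, hk⟩, hkb⟩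
  have hbij : Bijective (fun k : Fin n => f^[k] z) :=
    Finite.injective_iff_bijective.mp fun a b hab =>
      Fin.ext (hinj (by simp [hmn]) (by simp [hmn]) hab)
  refine ⟨Equiv.ofBijective _ hbij, fun i => ?_⟩
  have hmod : ((i : ℕ) + 1) % n = ((i : ℕ) + 1) % m := by rw [hmn]
  rw [Equiv.ofBijective_apply, Equiv.ofBijective_apply, val_finRotate, hmod,
    iterate_mod_minimalPeriod_eq]
  exact (iterate_succ_apply' f i z).symm

namespace SignlessDigraph

variable {n : ℕ} {W : Fin n → Fin n → ℕ}

theorem outdeg_pos_iff {v : Fin n} : 0 < outdeg W v ↔ ∃ j, W v j ≠ 0 := by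
  simp [outdeg, Finset.sum_pos_iff, Nat.pos_iff_ne_zero]

theorem apply_eq_ite_of_outdeg_eq_one {v b : Fin n} (hv : outdeg W v = 1) (hb : W v b ≠ 0)
    (k : Fin n) : W v k = if k = b then 1 else 0 := by
  have hsplit := Finset.add_sum_erase Finset.univ (W v) (Finset.mem_univ b)
  rw [← outdeg] at hsplit
  have hrest : ∑ j ∈ Finset.univ.erase b, W v j = 0 := by omega
  split_ifs with hk
  · subst hk; omega
  · exact Finset.sum_eq_zero_iff.mp hrest k (Finset.mem_erase.mpr ⟨hk, Finset.mem_univ k⟩)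

theorem StronglyConnected.outdeg_pos (hsc : StronglyConnected W) {v : Fin n}
    (hv : 0 < outdeg W v) (u : Fin n) : 0 < outdeg W u := by
  rcases (hsc u v).cases_head with rfl | ⟨c, huc, -⟩
  · exact hv
  · exact outdeg_pos_iff.mpr ⟨c, huc⟩

theorem exists_iterate_eq_of_reflTransGen {f : Fin n → Fin n}
    (hf : ∀ v j, W v j ≠ 0 → j = f v) {a b : Fin n}
    (hab : Relation.ReflTransGen (fun a b => W a b ≠ 0) a b) : ∃ k, f^[k] a = b := by
  induction hab with
  | refl => exact ⟨0, rfl⟩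
  | tail _ hbc ih =>
    obtain ⟨k, rfl⟩ := ih
    exact ⟨k + 1, by rw [iterate_succ_apply', hf _ _ hbc]⟩

theorem StronglyConnected.iso_cyc (hsc : StronglyConnected W) (hd : ∀ v, outdeg W v = 1) :
    Iso W (cyc n) := by
  choose f hf using fun v => outdeg_pos_iff.mp (hd v ▸ one_pos : 0 < outdeg W v)
  have hW : ∀ v k, W v k = if k = f v then 1 else 0 :=
    fun v => apply_eq_ite_of_outdeg_eq_one (hd v) (hf v)
  obtain ⟨e, he⟩ := exists_conj_finRotate f fun a b =>
    exists_iterate_eq_of_reflTransGen (fun v j hvj => by simpa [hW] using hvj) (hsc a b)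
  refine ⟨e, fun i j => ?_⟩
  simp only [hW, cyc, he, e.apply_eq_iff_eq, Fin.ext_iff, val_finRotate]

theorem StronglyConnected.exists_two_le_outdeg (hsc : StronglyConnected W)
    (hnc : ¬ Iso W (cyc n)) {v : Fin n} (hv : 0 < outdeg W v) : ∃ u, 2 ≤ outdeg W u := by
  by_contra! h
  exact hnc (hsc.iso_cyc fun u => by have := hsc.outdeg_pos hv u; have := h u; omega)

theorem mulVec_Qmat_apply (x : Fin n → ℝ) (v : Fin n) :
    (Qmat W *ᵥ x) v = outdeg W v * x v + ∑ j, (W v j : ℝ) * x j := by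
  rw [Qmat, add_mulVec, Pi.add_apply, mulVec_diagonal]
  rfl

variable {x : Fin n → ℝ} {r : ℝ}

theorem outdeg_lt_of_mulVec_Qmat_eq (hx : ∀ i, 0 < x i) (hxeig : Qmat W *ᵥ x = r • x)
    {v : Fin n} (hv : 0 < outdeg W v) : (outdeg W v : ℝ) < r := by
  obtain ⟨j, hj⟩ := outdeg_pos_iff.mp hv
  have hsum : 0 < ∑ j, (W v j : ℝ) * x j :=
    Finset.sum_pos' (fun k _ => mul_nonneg (Nat.cast_nonneg _) (hx k).le)
      ⟨j, Finset.mem_univ j, mul_pos (by positivity) (hx j)⟩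
  have hrow := congrFun hxeig v
  rw [mulVec_Qmat_apply, Pi.smul_apply, smul_eq_mul] at hrow
  nlinarith [hx v]

theorem apply_eq_of_outdeg_eq_one (hxeig : Qmat W *ᵥ x = r • x) {a b : Fin n}
    (ha : outdeg W a = 1) (hab : W a b ≠ 0) : x b = (r - 1) * x a := by
  have hrow := congrFun hxeig a
  simp only [mulVec_Qmat_apply, apply_eq_ite_of_outdeg_eq_one ha hab, Nat.cast_ite,
    Nat.cast_one, Nat.cast_zero, ite_mul, one_mul, zero_mul, Finset.sum_ite_eq',
    Finset.mem_univ, if_true, ha, Pi.smul_apply, smul_eq_mul] at hrow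
  linarith

/-- Along a directed path `u_1 u_2 ⋯ u_l` (here `0`-indexed as
`p 0, p 1, …, p (l-1)`) whose internal vertices `u_2, …, u_{l-1}` all have outdegree `1`,
the coordinates of the positive unit eigenvector of `Q(D)` satisfy
`x_{u_2} < x_{u_3} < ⋯ < x_{u_l}`. -/
theorem eigenvector_increasing_on_path {n l : ℕ} (W : Fin n → Fin n → ℕ)
    (hsc : StronglyConnected W) (hnc : ¬ Iso W (cyc n))
    (p : Fin l → Fin n)
    (hpath : ∀ i : ℕ, ∀ hi : i + 1 < l,
      W (p ⟨i, Nat.lt_of_succ_lt hi⟩) (p ⟨i + 1, hi⟩) ≠ 0)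
    (hdeg : ∀ i : ℕ, ∀ hi : i < l, 1 ≤ i → i ≤ l - 2 → outdeg W (p ⟨i, hi⟩) = 1)
    (x : Fin n → ℝ) (hxpos : ∀ i, 0 < x i)
    (hxeig : Qmat W *ᵥ x = q W • x) :
    ∀ i : ℕ, ∀ _h1 : 1 ≤ i, ∀ _h2 : i + 1 ≤ l - 1,
      x (p ⟨i, by omega⟩) < x (p ⟨i + 1, by omega⟩) := by
  intro i h1 h2
  have hdeg_i : outdeg W (p ⟨i, by omega⟩) = 1 := hdeg i _ h1 (by omega)
  obtain ⟨u, hu⟩ := hsc.exists_two_le_outdeg hnc (hdeg_i ▸ one_pos)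
  have hq : 2 < q W :=
    lt_of_le_of_lt (by exact_mod_cast hu) (outdeg_lt_of_mulVec_Qmat_eq hxpos hxeig (by omega))
  rw [apply_eq_of_outdeg_eq_one hxeig hdeg_i (hpath i (by omega))]
  nlinarith [hxpos (p ⟨i, by omega⟩)]

end SignlessDigraph
end
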